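/- arXiv:2109.03768 — 3 statements merged into one kernel-verified Lean document; each statement's English description precedes it below -/
import Mathlib

section
/- For every copula C on [0,1]^d admitting a continuous density and for every ε > 0, there exists a grid ρ of [0,1]^d such that the Hellinger distance between C and its grid-uniform version C_ρ is less than ε. In particular, the class of grid-uniform copulas is dense in the class of copulas with continuous density in the Hellinger metric. -/
open MeasureTheory Set

/-- An orthogonal grid of `[0,1]^d`: for each coordinate a strictly increasing
finite sequence of points starting at `0` and ending at `1`. -/
structure Grid (d : ℕ) where
  n : Fin d → ℕ
  npos : ∀ i, 0 < n i
  pts : (i : Fin d) → Fin (n i + 1) → ℝ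
  mono : ∀ i, StrictMono (pts i)
  first : ∀ i, pts i 0 = 0
  last : ∀ i, pts i (Fin.last (n i)) = 1

variable {d : ℕ}

/-- Index set of the cells of a grid. -/
abbrev Grid.CellIdx (g : Grid d) := (i : Fin d) → Fin (g.n i)

/-- The half-open rectangular cell of the grid with upper-right corner indexed by `k`. -/
def Grid.cell (g : Grid d) (k : g.CellIdx) : Set (Fin d → ℝ) :=
  Set.univ.pi fun i => Set.Ioc (g.pts i (k i).castSucc) (g.pts i (k i).succ)

/-- The measure on `[0,1]^d` assigning mass `w k` to cell `k`,
distributed uniformly (proportionally to Lebesgue measure) within each cell. -/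
noncomputable def Grid.massMeasure (g : Grid d) (w : g.CellIdx → ℝ) :
    Measure (Fin d → ℝ) :=
  Measure.sum fun k : g.CellIdx =>
    (ENNReal.ofReal (w k) / volume (g.cell k)) • volume.restrict (g.cell k)

/-- The grid-uniform version `C_ρ` of a measure `C`: each cell `B` receives the
mass `C(B)`, distributed uniformly within the cell. -/
noncomputable def Grid.gridUniform (g : Grid d) (μ : Measure (Fin d → ℝ)) :
    Measure (Fin d → ℝ) :=
  Measure.sum fun k : g.CellIdx =>
    (μ (g.cell k) / volume (g.cell k)) • volume.restrict (g.cell k)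

/-- A copula: a probability measure on `ℝ^d` each of whose one-dimensional
marginals is the uniform distribution on `[0,1]`. -/
def IsCopula {d : ℕ} (μ : Measure (Fin d → ℝ)) : Prop :=
  IsProbabilityMeasure μ ∧
    ∀ i : Fin d, μ.map (fun x => x i) = volume.restrict (Set.Icc (0:ℝ) 1)

/-- The density of the grid-uniform version of the density `c`: on each cell it
equals the average of `c` over that cell. -/
noncomputable def Grid.avgDensity (g : Grid d) (c : (Fin d → ℝ) → ℝ) :
    (Fin d → ℝ) → ℝ :=
  fun x => ∑ k : g.CellIdx,
    Set.indicator (g.cell k)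
      (fun _ => (∫ y in g.cell k, c y) / (volume (g.cell k)).toReal) x

private lemma sq_sqrt_sub_le' {a b : ℝ} (ha : 0 ≤ a) (hb : 0 ≤ b) (hba : b ≤ a) :
    (Real.sqrt a - Real.sqrt b) ^ 2 ≤ a - b := by
  have h1 : Real.sqrt b * Real.sqrt b ≤ Real.sqrt a * Real.sqrt b :=
    mul_le_mul_of_nonneg_right (Real.sqrt_le_sqrt hba) (Real.sqrt_nonneg b)
  have h2 : Real.sqrt b * Real.sqrt b = b := Real.mul_self_sqrt hb
  have h3 : Real.sqrt a * Real.sqrt a = a := Real.mul_self_sqrt ha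
  nlinarith [Real.sqrt_nonneg a, Real.sqrt_nonneg b]

lemma sq_sqrt_sub_le {a b : ℝ} (ha : 0 ≤ a) (hb : 0 ≤ b) :
    (Real.sqrt a - Real.sqrt b) ^ 2 ≤ |a - b| := by
  rcases le_total b a with h | h
  · rw [abs_of_nonneg (by linarith)]; exact sq_sqrt_sub_le' ha hb h
  · rw [abs_of_nonpos (by linarith)]
    have := sq_sqrt_sub_le' hb ha h
    nlinarith [this]

/-- The uniform grid with `n` cells in each direction. -/
noncomputable def unifGrid (d n : ℕ) (hn : 0 < n) : Grid d where
  n _ := n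
  npos _ := hn
  pts _ j := (j : ℝ) / n
  mono _ := by
    intro a b hab
    have hnR : (0:ℝ) < n := by exact_mod_cast hn
    have hab' : ((a : ℕ) : ℝ) < ((b : ℕ) : ℝ) := by exact_mod_cast hab
    exact div_lt_div_of_pos_right hab' hnR
  first _ := by simp
  last _ := by
    have hnR : ((n:ℝ)) ≠ 0 := by positivity
    simp [Fin.val_last, div_self hnR]

lemma mem_unifGrid_cell {d n : ℕ} (hn : 0 < n) (k : (unifGrid d n hn).CellIdx)
    (x : Fin d → ℝ) :
    x ∈ (unifGrid d n hn).cell k ↔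
      ∀ i, ((k i : ℕ) : ℝ)/n < x i ∧ x i ≤ (((k i : ℕ) : ℝ)+1)/n := by
  simp only [Grid.cell, unifGrid, Set.mem_pi, Set.mem_univ, forall_true_left,
    Set.mem_Ioc, Fin.coe_castSucc, Fin.val_succ]
  push_cast
  exact forall_congr' fun i => and_congr Iff.rfl (by rw [← Nat.cast_succ]; rfl)

/-- every copula with continuous density can be approximated in
Hellinger distance by its grid-uniform versions. -/
theorem gridUniform_dense_continuous_density (c : (Fin d → ℝ) → ℝ)
    (hcont : ContinuousOn c (Set.univ.pi fun _ : Fin d => Set.Icc (0:ℝ) 1))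
    (hnn : ∀ x, 0 ≤ c x)
    (hcop : IsCopula ((volume.restrict (Set.univ.pi fun _ : Fin d => Set.Icc (0:ℝ) 1)).withDensity
      fun x => ENNReal.ofReal (c x)))
    (ε : ℝ) (hε : 0 < ε) :
    ∃ g : Grid d,
      Real.sqrt ((1/2) * ∫ x in Set.univ.pi fun _ : Fin d => Set.Icc (0:ℝ) 1,
        (Real.sqrt (c x) - Real.sqrt (g.avgDensity c x)) ^ 2) < ε := by
  classical
  set K : Set (Fin d → ℝ) := Set.univ.pi fun _ : Fin d => Set.Icc (0:ℝ) 1 with hKdef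
  have hKc : IsCompact K := isCompact_univ_pi fun _ => isCompact_Icc
  have hKm : MeasurableSet K := MeasurableSet.univ_pi fun _ => measurableSet_Icc
  have hvolK : volume K = 1 := by
    rw [hKdef, volume_pi_pi]
    simp [Real.volume_Icc]
  obtain ⟨δ, hδ, hunif⟩ := Metric.uniformContinuousOn_iff.mp
    (hKc.uniformContinuousOn_of_continuous hcont) (ε ^ 2) (pow_pos hε 2)
  obtain ⟨N0, hN0⟩ := exists_nat_gt (1 / δ)
  set n : ℕ := max N0 1 with hndef
  have hn0 : 0 < n := lt_of_lt_of_le Nat.one_pos (le_max_right _ _)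
  have hnR : (0:ℝ) < n := by exact_mod_cast hn0
  have hnδ : 1 / (n:ℝ) < δ := by
    have h1 : (1:ℝ)/δ < n := lt_of_lt_of_le hN0 (by exact_mod_cast le_max_left N0 1)
    rw [div_lt_iff₀ hδ] at h1
    rw [div_lt_iff₀ hnR, mul_comm]
    linarith
  set g : Grid d := unifGrid d n hn0 with hg
  refine ⟨g, ?_⟩
  -- basic facts about cells
  have hmem : ∀ (k : g.CellIdx) (x : Fin d → ℝ), x ∈ g.cell k ↔
      ∀ i, ((k i : ℕ) : ℝ)/n < x i ∧ x i ≤ (((k i : ℕ) : ℝ)+1)/n :=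
    fun k x => mem_unifGrid_cell hn0 k x
  have hkub : ∀ (k : g.CellIdx) (i : Fin d), (((k i : ℕ) : ℝ)+1)/n ≤ 1 := by
    intro k i
    rw [div_le_one hnR]
    exact_mod_cast Nat.succ_le_of_lt (k i).isLt
  have hsubK : ∀ k : g.CellIdx, g.cell k ⊆ K := by
    intro k x hx
    intro i _
    obtain ⟨h1, h2⟩ := (hmem k x).mp hx i
    constructor
    · have : (0:ℝ) ≤ ((k i : ℕ) : ℝ)/n := by positivity
      linarith
    · exact le_trans h2 (hkub k i)
  have hcellm : ∀ k : g.CellIdx, MeasurableSet (g.cell k) :=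
    fun k => MeasurableSet.univ_pi fun i => measurableSet_Ioc
  have hcellvol : ∀ k : g.CellIdx,
      volume (g.cell k) = ENNReal.ofReal (1/(n:ℝ)) ^ d := by
    intro k
    rw [Grid.cell, volume_pi_pi]
    rw [show (ENNReal.ofReal (1/(n:ℝ)))^d = ∏ _i : Fin d, ENNReal.ofReal (1/(n:ℝ)) by
      simp [Finset.prod_const]]
    refine Finset.prod_congr rfl fun i _ => ?_
    rw [Real.volume_Ioc]
    congr 1
    show (((k i).succ : ℕ) : ℝ)/n - (((k i).castSucc : ℕ) : ℝ)/n = 1/n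
    rw [Fin.val_succ, Fin.coe_castSucc, div_sub_div_same]
    push_cast
    ring_nf
  have hvpos : ∀ k : g.CellIdx, 0 < volume (g.cell k) := by
    intro k
    rw [hcellvol k]
    exact ENNReal.pow_pos (ENNReal.ofReal_pos.mpr (by positivity)) d
  have hvfin : ∀ k : g.CellIdx, volume (g.cell k) < ⊤ := by
    intro k
    rw [hcellvol k]
    exact ENNReal.pow_lt_top ENNReal.ofReal_lt_top
  have hvtR : ∀ k : g.CellIdx, 0 < (volume (g.cell k)).toReal :=
    fun k => ENNReal.toReal_pos (hvpos k).ne' (hvfin k).ne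
  -- integrability on cells
  have hInt : ∀ k : g.CellIdx, IntegrableOn c (g.cell k) volume := by
    intro k
    have hcs : g.cell k ⊆ univ.pi fun i =>
        Icc (((k i : ℕ) : ℝ)/n) ((((k i : ℕ) : ℝ)+1)/n) := by
      intro x hx i _
      exact Ioc_subset_Icc_self (Set.mem_Ioc.mpr ((hmem k x).mp hx i))
    have hccK : (univ.pi fun i =>
        Icc (((k i : ℕ) : ℝ)/n) ((((k i : ℕ) : ℝ)+1)/n)) ⊆ K := by
      intro x hx i _
      obtain ⟨h1, h2⟩ := hx i (mem_univ i)
      constructor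
      · have : (0:ℝ) ≤ ((k i : ℕ) : ℝ)/n := by positivity
        linarith
      · exact le_trans h2 (hkub k i)
    exact ((hcont.mono hccK).integrableOn_compact
      (isCompact_univ_pi fun i => isCompact_Icc)).mono_set hcs
  -- the average is within ε^2 of c x on each cell
  have hbound : ∀ (k : g.CellIdx) (x : Fin d → ℝ), x ∈ g.cell k →
      |(∫ y in g.cell k, c y) / (volume (g.cell k)).toReal - c x| ≤ ε ^ 2 := by
    intro k x hx
    set v : ℝ := (volume (g.cell k)).toReal with hv
    have hv0 : 0 < v := hvtR k
    have hdistcell : ∀ y ∈ g.cell k, dist y x < δ := by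
      intro y hy
      refine lt_of_le_of_lt ?_ hnδ
      rw [dist_pi_le_iff (by positivity)]
      intro i
      obtain ⟨hy1, hy2⟩ := (hmem k y).mp hy i
      obtain ⟨hx1, hx2⟩ := (hmem k x).mp hx i
      have hba : (((k i : ℕ) : ℝ)+1)/n - ((k i : ℕ) : ℝ)/n = 1/n := by
        rw [div_sub_div_same]; ring_nf
      rw [Real.dist_eq, abs_le]
      constructor <;> linarith
    have hcb : ∀ y ∈ g.cell k, ‖c y - c x‖ ≤ ε ^ 2 := by
      intro y hy
      have := hunif y (hsubK k hy) x (hsubK k hx) (hdistcell y hy)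
      rw [Real.dist_eq] at this
      rw [Real.norm_eq_abs]
      exact this.le
    have hIsub : ∫ y in g.cell k, (c y - c x) = (∫ y in g.cell k, c y) - v * c x := by
      rw [integral_sub (hInt k) (integrableOn_const (hvfin k).ne)]
      rw [setIntegral_const, smul_eq_mul, measureReal_def]
    have hkey : |(∫ y in g.cell k, c y) - v * c x| ≤ ε ^ 2 * v := by
      rw [← hIsub, ← Real.norm_eq_abs]
      exact norm_setIntegral_le_of_norm_le_const (hvfin k) hcb
    have heq : (∫ y in g.cell k, c y) / v - c x = ((∫ y in g.cell k, c y) - v * c x) / v := by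
      field_simp
    rw [heq, abs_div, abs_of_pos hv0, div_le_iff₀ hv0]
    exact hkey
  -- avgDensity on a cell
  have havg : ∀ (k : g.CellIdx) (x : Fin d → ℝ), x ∈ g.cell k →
      g.avgDensity c x = (∫ y in g.cell k, c y) / (volume (g.cell k)).toReal := by
    intro k x hx
    rw [Grid.avgDensity]
    rw [Finset.sum_eq_single_of_mem k (Finset.mem_univ k)]
    · rw [Set.indicator_of_mem hx]
    · intro k' _ hk'
      apply Set.indicator_of_notMem
      intro hx'
      obtain ⟨i, hi⟩ : ∃ i, k' i ≠ k i := by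
        by_contra h; push_neg at h; exact hk' (funext h)
      obtain ⟨ha1, ha2⟩ := (hmem k x).mp hx i
      obtain ⟨hb1, hb2⟩ := (hmem k' x).mp hx' i
      rcases lt_or_gt_of_ne hi with h | h
      · have hc : ((k' i : ℕ) : ℝ) + 1 ≤ ((k i : ℕ) : ℝ) := by
          exact_mod_cast Nat.succ_le_of_lt h
        have hd : ((((k' i : ℕ) : ℝ))+1)/n ≤ ((k i : ℕ) : ℝ)/n := by gcongr
        linarith
      · have hc : ((k i : ℕ) : ℝ) + 1 ≤ ((k' i : ℕ) : ℝ) := by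
          exact_mod_cast Nat.succ_le_of_lt h
        have hd : ((((k i : ℕ) : ℝ))+1)/n ≤ ((k' i : ℕ) : ℝ)/n := by gcongr
        linarith
  have havgnn : ∀ k : g.CellIdx,
      0 ≤ (∫ y in g.cell k, c y) / (volume (g.cell k)).toReal := by
    intro k
    apply div_nonneg _ ENNReal.toReal_nonneg
    exact setIntegral_nonneg (hcellm k) fun y _ => hnn y
  -- a.e. pointwise bound on K
  have hae : ∀ᵐ x, x ∈ K → ‖(Real.sqrt (c x) - Real.sqrt (g.avgDensity c x)) ^ 2‖ ≤ ε ^ 2 := by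
    have hplane : ∀ i : Fin d, volume {x : Fin d → ℝ | x i = 0} = 0 := by
      intro i
      rw [volume_pi]
      exact Measure.pi_hyperplane _ i 0
    have hBnull : volume (⋃ i, {x : Fin d → ℝ | x i = 0}) = 0 := measure_iUnion_null hplane
    filter_upwards [compl_mem_ae_iff.mpr hBnull] with x hxB hxK
    simp only [mem_compl_iff, mem_iUnion, mem_setOf_eq, not_exists] at hxB
    have hx' : ∀ i, ∃ j : Fin n, ((j : ℕ) : ℝ)/n < x i ∧ x i ≤ (((j : ℕ) : ℝ)+1)/n := by
      intro i
      obtain ⟨hx0, hx1⟩ := hxK i (mem_univ i)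
      have hx0' : 0 < x i := lt_of_le_of_ne hx0 (Ne.symm (hxB i))
      set m : ℤ := ⌈(n:ℝ) * x i⌉ with hm
      have hm1 : 1 ≤ m := Int.ceil_pos.mpr (by positivity)
      have hmn : m ≤ (n : ℤ) := Int.ceil_le.mpr (by push_cast; nlinarith)
      have htn : m.toNat ≤ n := by omega
      have ht1 : 1 ≤ m.toNat := by omega
      refine ⟨⟨m.toNat - 1, by omega⟩, ?_, ?_⟩
      · have hcast : (((m.toNat - 1 : ℕ)) : ℝ) = (m : ℝ) - 1 := by
          have h2 : ((m.toNat - 1 : ℕ) : ℤ) = m - 1 := by omega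
          exact_mod_cast h2
        show (((m.toNat - 1 : ℕ)) : ℝ)/n < x i
        rw [hcast, div_lt_iff₀ hnR]
        have := Int.ceil_lt_add_one ((n:ℝ) * x i)
        rw [← hm] at this
        nlinarith
      · have hcast : (((m.toNat - 1 : ℕ)) : ℝ) + 1 = (m : ℝ) := by
          have h2 : ((m.toNat - 1 : ℕ) : ℤ) + 1 = m := by omega
          exact_mod_cast h2
        show x i ≤ ((((m.toNat - 1 : ℕ)) : ℝ) + 1)/n
        rw [hcast, le_div_iff₀ hnR]
        have := Int.le_ceil ((n:ℝ) * x i)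
        rw [← hm] at this
        nlinarith
    choose j hj using hx'
    have hxcell : x ∈ g.cell j := (hmem j x).mpr hj
    rw [havg j x hxcell, Real.norm_eq_abs, abs_of_nonneg (sq_nonneg _)]
    calc (Real.sqrt (c x) - Real.sqrt ((∫ y in g.cell j, c y) / (volume (g.cell j)).toReal)) ^ 2
        ≤ |c x - (∫ y in g.cell j, c y) / (volume (g.cell j)).toReal| :=
          sq_sqrt_sub_le (hnn x) (havgnn j)
      _ = |(∫ y in g.cell j, c y) / (volume (g.cell j)).toReal - c x| := abs_sub_comm _ _
      _ ≤ ε ^ 2 := hbound j x hxcell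
  -- conclude
  have hIle : (∫ x in K, (Real.sqrt (c x) - Real.sqrt (g.avgDensity c x)) ^ 2) ≤ ε ^ 2 := by
    have h := norm_setIntegral_le_of_norm_le_const_ae'
      (by rw [hvolK]; exact ENNReal.one_lt_top) hae
    rw [measureReal_def, hvolK, ENNReal.toReal_one, mul_one, Real.norm_eq_abs] at h
    exact le_trans (le_abs_self _) h
  have hInn : 0 ≤ ∫ x in K, (Real.sqrt (c x) - Real.sqrt (g.avgDensity c x)) ^ 2 :=
    setIntegral_nonneg hKm fun x _ => sq_nonneg _
  have hlt : (1/2) * (∫ x in K, (Real.sqrt (c x) - Real.sqrt (g.avgDensity c x)) ^ 2) < ε ^ 2 := by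
    nlinarith [pow_pos hε 2]
  calc Real.sqrt ((1/2) * ∫ x in K, (Real.sqrt (c x) - Real.sqrt (g.avgDensity c x)) ^ 2)
      < Real.sqrt (ε ^ 2) := Real.sqrt_lt_sqrt (by linarith) hlt
    _ = ε := Real.sqrt_sq hε.le
end

section
/- Let ρ be a grid of [0,1]² of size m × (k+1) columnwise, and let C and C' be ρ-uniform copulas on this grid that agree in every column except the k-th and (k+1)-st, and satisfy C'(ν_{i,k}) + C'(ν_{i,k+1}) = C(ν_{i,k}) + C(ν_{i,k+1}) for all rows i. Then there is a finite sequence of at most m−1 rectangle exchanges (each involving cells in columns k and k+1) transforming C' into C. -/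
def ExchLastTwoCols {m n : ℕ} (w w' : Fin m → Fin (n + 2) → ℝ) : Prop :=
  ∃ (α β : Fin m) (ε : ℝ), α ≠ β ∧
    (∀ i j, w' i j ≥ 0) ∧
    w' = fun i j =>
      if i = α ∧ j = (⟨n, by omega⟩ : Fin (n + 2)) then w i j - ε
      else if i = α ∧ j = (⟨n + 1, by omega⟩ : Fin (n + 2)) then w i j + ε
      else if i = β ∧ j = (⟨n, by omega⟩ : Fin (n + 2)) then w i j + ε
      else if i = β ∧ j = (⟨n + 1, by omega⟩ : Fin (n + 2)) then w i j - ε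
      else w i j

private def cN (n : ℕ) : Fin (n + 2) := ⟨n, by omega⟩
private def cN1 (n : ℕ) : Fin (n + 2) := ⟨n + 1, by omega⟩

@[simp] private lemma cN_val (n : ℕ) : ((cN n : Fin (n+2)) : ℕ) = n := rfl
@[simp] private lemma cN1_val (n : ℕ) : ((cN1 n : Fin (n+2)) : ℕ) = n + 1 := rfl

private lemma cN_ne_cN1 (n : ℕ) : cN n ≠ cN1 n := by
  intro h
  have := congrArg Fin.val h
  simp at this

private lemma exch_aux {m n : ℕ} (w : Fin m → Fin (n + 2) → ℝ)
    (hw : ∀ i j, 0 ≤ w i j) :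
    ∀ s : ℕ, ∀ w' : Fin m → Fin (n + 2) → ℝ,
      (∀ i j, 0 ≤ w' i j) →
      ((∑ i, w' i (cN n)) = ∑ i, w i (cN n)) →
      (∀ i, ∀ j : Fin (n + 2), (j : ℕ) < n → w' i j = w i j) →
      (∀ i, w' i (cN n) + w' i (cN1 n) = w i (cN n) + w i (cN1 n)) →
      (Finset.univ.filter fun i => w' i (cN n) ≠ w i (cN n)).card ≤ s →
      ∃ (N : ℕ) (f : ℕ → Fin m → Fin (n + 2) → ℝ),
        N ≤ s - 1 ∧ f 0 = w' ∧ f N = w ∧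
        ∀ t < N, ExchLastTwoCols (f t) (f (t + 1)) := by
  intro s
  induction s with
  | zero =>
    intro w' hw' hcol hagree hpair hcard
    -- card = 0, so w' = w
    have hcard0 : (Finset.univ.filter fun i => w' i (cN n) ≠ w i (cN n)) = ∅ :=
      Finset.card_eq_zero.mp (Nat.le_zero.mp hcard)
    have hS0 : ∀ i, w' i (cN n) = w i (cN n) := by
      intro i
      by_contra h
      have : i ∈ Finset.univ.filter fun i => w' i (cN n) ≠ w i (cN n) :=
        Finset.mem_filter.mpr ⟨Finset.mem_univ i, h⟩
      simp [hcard0] at this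
    have hw'w : w' = w := by
      funext i j
      rcases lt_trichotomy (j : ℕ) n with h | h | h
      · exact hagree i j h
      · have : j = cN n := Fin.ext h
        rw [this]; exact hS0 i
      · have hj : (j : ℕ) = n + 1 := by have := j.isLt; omega
        have : j = cN1 n := Fin.ext hj
        rw [this]
        have := hpair i
        have := hS0 i
        linarith
    exact ⟨0, fun _ => w, by omega, hw'w.symm ▸ rfl, rfl, by intro t ht; omega⟩
  | succ s ih =>
    intro w' hw' hcol hagree hpair hcard
    by_cases hS : (Finset.univ.filter fun i => w' i (cN n) ≠ w i (cN n)).card = 0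
    · obtain ⟨N, f, hN, h0, hE, hsteps⟩ := ih w' hw' hcol hagree hpair (by rw [hS]; exact Nat.zero_le s)
      exact ⟨N, f, by omega, h0, hE, hsteps⟩
    · -- there is a mismatch
      have hsum : ∑ i, (w' i (cN n) - w i (cN n)) = 0 := by
        rw [Finset.sum_sub_distrib, hcol]; ring
      obtain ⟨i0, hi0⟩ : ∃ i0, i0 ∈ Finset.univ.filter fun i => w' i (cN n) ≠ w i (cN n) := by
        rcases Finset.card_pos.mp (Nat.pos_of_ne_zero hS) with ⟨i0, hi0⟩
        exact ⟨i0, hi0⟩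
      have hi0' : w' i0 (cN n) ≠ w i0 (cN n) := (Finset.mem_filter.mp hi0).2
      obtain ⟨α, hα⟩ : ∃ α, 0 < w' α (cN n) - w α (cN n) := by
        by_contra h
        push_neg at h
        have := (Finset.sum_eq_zero_iff_of_nonpos (fun i _ => h i)).mp hsum
        exact hi0' (by have := this i0 (Finset.mem_univ i0); linarith)
      obtain ⟨β, hβ⟩ : ∃ β, w' β (cN n) - w β (cN n) < 0 := by
        by_contra h
        push_neg at h
        have := (Finset.sum_eq_zero_iff_of_nonneg (fun i _ => by linarith [h i])).mp hsum
        exact hi0' (by have := this i0 (Finset.mem_univ i0); linarith)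
      have hαβ : α ≠ β := by intro e; rw [e] at hα; linarith
      set ε : ℝ := min (w' α (cN n) - w α (cN n)) (w β (cN n) - w' β (cN n)) with hεdef
      have hε0 : 0 < ε := lt_min hα (by linarith)
      have hε1 : ε ≤ w' α (cN n) - w α (cN n) := min_le_left _ _
      have hε2 : ε ≤ w β (cN n) - w' β (cN n) := min_le_right _ _
      set w'' : Fin m → Fin (n + 2) → ℝ := fun i j =>
        if i = α ∧ j = (⟨n, by omega⟩ : Fin (n + 2)) then w' i j - ε
        else if i = α ∧ j = (⟨n + 1, by omega⟩ : Fin (n + 2)) then w' i j + ε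
        else if i = β ∧ j = (⟨n, by omega⟩ : Fin (n + 2)) then w' i j + ε
        else if i = β ∧ j = (⟨n + 1, by omega⟩ : Fin (n + 2)) then w' i j - ε
        else w' i j with hw''def
      have hcc : (⟨n, by omega⟩ : Fin (n + 2)) = cN n := rfl
      have hcc1 : (⟨n + 1, by omega⟩ : Fin (n + 2)) = cN1 n := rfl
      have hne : cN n ≠ cN1 n := cN_ne_cN1 n
      have hA : w'' α (cN n) = w' α (cN n) - ε := by
        simp [hw''def, hcc, hcc1]
      have hB : w'' α (cN1 n) = w' α (cN1 n) + ε := by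
        simp [hw''def, hcc, hcc1, hne.symm]
      have hC : w'' β (cN n) = w' β (cN n) + ε := by
        simp [hw''def, hcc, hcc1, hαβ.symm]
      have hD : w'' β (cN1 n) = w' β (cN1 n) - ε := by
        simp [hw''def, hcc, hcc1, hαβ.symm, hne.symm]
      have hE : ∀ i, i ≠ α → i ≠ β → ∀ j, w'' i j = w' i j := by
        intro i h1 h2 j
        simp [hw''def, h1, h2]
      have hF : ∀ i j, j ≠ cN n → j ≠ cN1 n → w'' i j = w' i j := by
        intro i j h1 h2
        simp [hw''def, hcc, hcc1, h1, h2]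
      -- nonnegativity of w''
      have hw'' : ∀ i j, 0 ≤ w'' i j := by
        intro i j
        by_cases h1 : i = α ∧ j = cN n
        · rw [h1.1, h1.2, hA]; linarith [hw α (cN n)]
        by_cases h2 : i = α ∧ j = cN1 n
        · rw [h2.1, h2.2, hB]; linarith [hw' α (cN1 n)]
        by_cases h3 : i = β ∧ j = cN n
        · rw [h3.1, h3.2, hC]; linarith [hw' β (cN n)]
        by_cases h4 : i = β ∧ j = cN1 n
        · rw [h4.1, h4.2, hD]; linarith [hpair β, hw β (cN1 n)]
        · have : w'' i j = w' i j := by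
            simp only [hw''def, hcc, hcc1]
            rw [if_neg h1, if_neg h2, if_neg h3, if_neg h4]
          rw [this]; exact hw' i j
      -- column sum preserved
      have hval : ∀ i, w'' i (cN n)
          = w' i (cN n) + ((if i = α then -ε else 0) + (if i = β then ε else 0)) := by
        intro i
        rcases eq_or_ne i α with h1 | h1
        · subst h1; rw [hA, if_pos rfl, if_neg hαβ]; ring
        · rcases eq_or_ne i β with h2 | h2
          · subst h2; rw [hC, if_neg h1, if_pos rfl]; ring
          · rw [hE i h1 h2, if_neg h1, if_neg h2]; ring
      have hcol'' : ∑ i, w'' i (cN n) = ∑ i, w i (cN n) := by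
        rw [Finset.sum_congr rfl (fun i _ => hval i), Finset.sum_add_distrib,
          Finset.sum_add_distrib, Finset.sum_ite_eq', Finset.sum_ite_eq']
        simp [hcol]
      -- agreement on earlier columns
      have hagree'' : ∀ i, ∀ j : Fin (n + 2), (j : ℕ) < n → w'' i j = w i j := by
        intro i j hj
        have h1 : j ≠ cN n := by intro e; rw [e] at hj; simp at hj
        have h2 : j ≠ cN1 n := by intro e; rw [e] at hj; simp at hj
        rw [hF i j h1 h2]; exact hagree i j hj
      -- pair sums preserved
      have hpair'' : ∀ i, w'' i (cN n) + w'' i (cN1 n) = w i (cN n) + w i (cN1 n) := by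
        intro i
        rcases eq_or_ne i α with h1 | h1
        · rw [h1, hA, hB]; linarith [hpair α]
        · rcases eq_or_ne i β with h2 | h2
          · rw [h2, hC, hD]; linarith [hpair β]
          · rw [hE i h1 h2 (cN n), hE i h1 h2 (cN1 n)]; exact hpair i
      -- membership facts
      have hαS : α ∈ Finset.univ.filter fun i => w' i (cN n) ≠ w i (cN n) :=
        Finset.mem_filter.mpr ⟨Finset.mem_univ α, by intro e; rw [e] at hα; linarith⟩
      have hβS : β ∈ Finset.univ.filter fun i => w' i (cN n) ≠ w i (cN n) :=
        Finset.mem_filter.mpr ⟨Finset.mem_univ β, by intro e; rw [e] at hβ; linarith⟩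
      have hs1 : 1 ≤ s := by
        have h2 : 1 < (Finset.univ.filter fun i => w' i (cN n) ≠ w i (cN n)).card :=
          Finset.one_lt_card.mpr ⟨α, hαS, β, hβS, hαβ⟩
        omega
      -- card decreases
      have hsub : ∃ γ ∈ (Finset.univ.filter fun i => w' i (cN n) ≠ w i (cN n)),
          (Finset.univ.filter fun i => w'' i (cN n) ≠ w i (cN n)) ⊆
          (Finset.univ.filter fun i => w' i (cN n) ≠ w i (cN n)).erase γ := by
        rcases le_or_gt (w' α (cN n) - w α (cN n)) (w β (cN n) - w' β (cN n)) with hle | hlt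
        · have hεα : ε = w' α (cN n) - w α (cN n) := min_eq_left hle
          have hαfix : w'' α (cN n) = w α (cN n) := by rw [hA, hεα]; ring
          refine ⟨α, hαS, ?_⟩
          intro i hi
          have hi' : w'' i (cN n) ≠ w i (cN n) := (Finset.mem_filter.mp hi).2
          have hiα : i ≠ α := by intro e; rw [e, hαfix] at hi'; exact hi' rfl
          refine Finset.mem_erase.mpr ⟨hiα, Finset.mem_filter.mpr ⟨Finset.mem_univ i, ?_⟩⟩
          rcases eq_or_ne i β with h2 | h2
          · rw [h2]; intro e; rw [e] at hβ; linarith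
          · rw [← hE i hiα h2 (cN n)]; exact hi'
        · have hεβ : ε = w β (cN n) - w' β (cN n) := min_eq_right (le_of_lt hlt)
          have hβfix : w'' β (cN n) = w β (cN n) := by rw [hC, hεβ]; ring
          refine ⟨β, hβS, ?_⟩
          intro i hi
          have hi' : w'' i (cN n) ≠ w i (cN n) := (Finset.mem_filter.mp hi).2
          have hiβ : i ≠ β := by intro e; rw [e, hβfix] at hi'; exact hi' rfl
          refine Finset.mem_erase.mpr ⟨hiβ, Finset.mem_filter.mpr ⟨Finset.mem_univ i, ?_⟩⟩
          rcases eq_or_ne i α with h1 | h1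
          · rw [h1]; intro e; rw [e] at hα; linarith
          · rw [← hE i h1 hiβ (cN n)]; exact hi'
      obtain ⟨γ, hγ, hsub⟩ := hsub
      have hcard'' : (Finset.univ.filter fun i => w'' i (cN n) ≠ w i (cN n)).card ≤ s := by
        have := Finset.card_le_card hsub
        have h2 := Finset.card_erase_of_mem hγ
        omega
      obtain ⟨N, f, hN, h0, hEnd, hsteps⟩ := ih w'' hw'' hcol'' hagree'' hpair'' hcard''
      refine ⟨N + 1, fun t => if t = 0 then w' else f (t - 1), by omega, rfl, by simp [hEnd], ?_⟩
      intro t ht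
      rcases eq_or_ne t 0 with h1 | h1
      · subst h1
        show ExchLastTwoCols (if (0:ℕ) = 0 then w' else f (0 - 1))
          (if (1:ℕ) = 0 then w' else f (1 - 1))
        have e2 : (if (1 : ℕ) = 0 then w' else f (1 - 1)) = w'' := by simp [h0]
        simp only [if_pos rfl, e2]
        exact ⟨α, β, ε, hαβ, fun i j => hw'' i j, hw''def⟩
      · show ExchLastTwoCols (if t = 0 then w' else f (t - 1))
          (if t + 1 = 0 then w' else f (t + 1 - 1))
        have e1 : (if t = 0 then w' else f (t - 1)) = f (t - 1) := if_neg h1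
        have e2 : (if t + 1 = 0 then w' else f (t + 1 - 1)) = f t := by simp
        rw [e1, e2]
        have := hsteps (t - 1) (by omega)
        rwa [Nat.sub_add_cancel (Nat.one_le_iff_ne_zero.mpr h1)] at this

/-- if two `ρ`-uniform copulas on an `m × (n+2)` grid (represented by
their nonnegative matrices of cell masses, with equal column sums) agree in every
column except the last two and have equal row sums over the last two columns, then
at most `m − 1` rectangle exchanges involving cells of the last two columns
transform one into the other. -/
theorem exchanges_fix_last_columns {m n : ℕ}
    (w w' : Fin m → Fin (n + 2) → ℝ)
    (hw : ∀ i j, 0 ≤ w i j) (hw' : ∀ i j, 0 ≤ w' i j)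
    (hcols : ∀ j, (∑ i, w i j) = ∑ i, w' i j)
    (hagree : ∀ i, ∀ j : Fin (n + 2), (j : ℕ) < n → w' i j = w i j)
    (hpair : ∀ i, w' i ⟨n, by omega⟩ + w' i ⟨n + 1, by omega⟩
      = w i ⟨n, by omega⟩ + w i ⟨n + 1, by omega⟩) :
    ∃ (N : ℕ) (f : ℕ → Fin m → Fin (n + 2) → ℝ),
      N ≤ m - 1 ∧ f 0 = w' ∧ f N = w ∧
      ∀ t < N, ExchLastTwoCols (f t) (f (t + 1)) := by
  have hcol : ∑ i, w' i (cN n) = ∑ i, w i (cN n) := (hcols (cN n)).symm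
  have hcard : (Finset.univ.filter fun i => w' i (cN n) ≠ w i (cN n)).card ≤ m := by
    calc (Finset.univ.filter fun i => w' i (cN n) ≠ w i (cN n)).card
        ≤ (Finset.univ : Finset (Fin m)).card := Finset.card_filter_le _ _
      _ = m := by simp
  obtain ⟨N, f, hN, h0, hEnd, hsteps⟩ := exch_aux w hw m w' hw' hcol hagree hpair hcard
  exact ⟨N, f, hN, h0, hEnd, hsteps⟩
end

section
/- Kendall's tau of a bivariate grid-uniform copula: let C be a ρ-uniform copula on [0,1]² with grid points a_0 = 0 < ... < a_m = 1, b_0 = 0 < ... < b_{m'} = 1 and piecewise-constant density values c_{k,l} on the cells. Then for independent pairs (U₁,V₁), (U₂,V₂) ~ C, Kendall's tau τ = 4∫∫ C(u,v) dC(u,v) − 1 admits a closed-form expression as a finite quadratic form in the cell probabilities, computable from the values {c_{k,l}}, the grid points {a_k}, {b_l}, and the cell masses alone. -/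
open MeasureTheory

variable {m m' : ℕ}

/-- Piecewise-constant copula density determined by grid points `a`, `b` and the
vector `P` of cell probabilities: on cell `(k,l)` the density is the cell mass
divided by the cell area. -/
noncomputable def cellDensity (a : Fin (m + 1) → ℝ) (b : Fin (m' + 1) → ℝ)
    (P : Fin m × Fin m' → ℝ) : (Fin 2 → ℝ) → ℝ :=
  fun x => ∑ p : Fin m × Fin m',
    if a p.1.castSucc < x 0 ∧ x 0 ≤ a p.1.succ ∧
       b p.2.castSucc < x 1 ∧ x 1 ≤ b p.2.succ
    then P p / ((a p.1.succ - a p.1.castSucc) * (b p.2.succ - b p.2.castSucc))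
    else 0

/-- The CDF `C(u,v)` of the grid-uniform copula with cell probabilities `P`. -/
noncomputable def cellCDF (a : Fin (m + 1) → ℝ) (b : Fin (m' + 1) → ℝ)
    (P : Fin m × Fin m' → ℝ) (x : Fin 2 → ℝ) : ℝ :=
  ∫ y in {y : Fin 2 → ℝ | y 0 ≤ x 0 ∧ y 1 ≤ x 1} ∩
      Set.univ.pi fun _ : Fin 2 => Set.Icc (0:ℝ) 1, cellDensity a b P y

/-- Kendall's tau `τ = 4 ∫∫ C(u,v) c(u,v) du dv − 1` of the grid-uniform copula. -/
noncomputable def kendallTau (a : Fin (m + 1) → ℝ) (b : Fin (m' + 1) → ℝ)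
    (P : Fin m × Fin m' → ℝ) : ℝ :=
  4 * (∫ x in Set.univ.pi fun _ : Fin 2 => Set.Icc (0:ℝ) 1,
    cellCDF a b P x * cellDensity a b P x) - 1

/-! ### Auxiliary machinery -/

/-- The bilinear "partial mass" function of a single cell. -/
noncomputable def gridF (a : Fin (m + 1) → ℝ) (b : Fin (m' + 1) → ℝ)
    (p : Fin m × Fin m') (x : Fin 2 → ℝ) : ℝ :=
  max (min (a p.1.succ) (x 0) - a p.1.castSucc) 0 *
    max (min (b p.2.succ) (x 1) - b p.2.castSucc) 0

lemma measurableSet_rect (α α' β β' : ℝ) :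
    MeasurableSet {x : Fin 2 → ℝ | α < x 0 ∧ x 0 ≤ α' ∧ β < x 1 ∧ x 1 ≤ β'} := by
  have h : {x : Fin 2 → ℝ | α < x 0 ∧ x 0 ≤ α' ∧ β < x 1 ∧ x 1 ≤ β'}
      = (fun x : Fin 2 → ℝ => x 0) ⁻¹' Set.Ioc α α'
        ∩ (fun x : Fin 2 → ℝ => x 1) ⁻¹' Set.Ioc β β' := by
    ext x
    simp only [Set.mem_setOf_eq, Set.mem_inter_iff, Set.mem_preimage, Set.mem_Ioc]
    tauto
  rw [h]
  exact ((measurable_pi_apply 0) measurableSet_Ioc).inter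
    ((measurable_pi_apply 1) measurableSet_Ioc)

lemma rect_inter_lower (x : Fin 2 → ℝ) {α α' β β' : ℝ}
    (h0 : 0 ≤ α) (h1 : α' ≤ 1) (h2 : 0 ≤ β) (h3 : β' ≤ 1) :
    {y : Fin 2 → ℝ | α < y 0 ∧ y 0 ≤ α' ∧ β < y 1 ∧ y 1 ≤ β'} ∩
      ({y : Fin 2 → ℝ | y 0 ≤ x 0 ∧ y 1 ≤ x 1} ∩
        Set.univ.pi fun _ : Fin 2 => Set.Icc (0:ℝ) 1)
    = Set.univ.pi ![Set.Ioc α (min α' (x 0)), Set.Ioc β (min β' (x 1))] := by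
  ext y
  simp only [Set.mem_inter_iff, Set.mem_setOf_eq, Set.mem_univ_pi, Fin.forall_fin_two,
    Set.mem_Icc, Set.mem_Ioc, Matrix.cons_val_zero, Matrix.cons_val_one, Matrix.head_cons,
    le_min_iff]
  constructor
  · rintro ⟨⟨p1, p2, p3, p4⟩, ⟨p5, p6⟩, _⟩
    exact ⟨⟨p1, p2, p5⟩, p3, p4, p6⟩
  · rintro ⟨⟨p1, p2, p5⟩, p3, p4, p6⟩
    exact ⟨⟨p1, p2, p3, p4⟩, ⟨p5, p6⟩,
      ⟨le_of_lt (lt_of_le_of_lt h0 p1), le_trans p2 h1⟩,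
      ⟨le_of_lt (lt_of_le_of_lt h2 p3), le_trans p4 h3⟩⟩

lemma volume_box (I J : Set ℝ) :
    volume (Set.univ.pi ![I, J] : Set (Fin 2 → ℝ)) = volume I * volume J := by
  rw [volume_pi_pi]
  simp [Fin.prod_univ_two]

lemma continuous_gridF (a : Fin (m + 1) → ℝ) (b : Fin (m' + 1) → ℝ)
    (p : Fin m × Fin m') : Continuous (gridF a b p) := by
  unfold gridF
  exact (((continuous_const.min (continuous_apply 0)).sub continuous_const).max
      continuous_const).mul
    (((continuous_const.min (continuous_apply 1)).sub continuous_const).max continuous_const)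

/-- Closed form of the grid-uniform copula CDF. -/
lemma cellCDF_eq (a : Fin (m + 1) → ℝ) (b : Fin (m' + 1) → ℝ)
    (ha : StrictMono a) (hb : StrictMono b)
    (ha0 : a 0 = 0) (ha1 : a (Fin.last m) = 1)
    (hb0 : b 0 = 0) (hb1 : b (Fin.last m') = 1)
    (P : Fin m × Fin m' → ℝ) (x : Fin 2 → ℝ) :
    cellCDF a b P x = ∑ p : Fin m × Fin m',
      (P p / ((a p.1.succ - a p.1.castSucc) * (b p.2.succ - b p.2.castSucc)))
        * gridF a b p x := by
  classical
  set T : Set (Fin 2 → ℝ) := {y : Fin 2 → ℝ | y 0 ≤ x 0 ∧ y 1 ≤ x 1} ∩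
      Set.univ.pi fun _ : Fin 2 => Set.Icc (0:ℝ) 1 with hT
  have hQfin : volume (Set.univ.pi fun _ : Fin 2 => Set.Icc (0:ℝ) 1) < ⊤ :=
    (isCompact_univ_pi fun _ => isCompact_Icc).measure_lt_top
  have hTfin : volume T < ⊤ :=
    lt_of_le_of_lt (measure_mono Set.inter_subset_right) hQfin
  have key : ∀ p : Fin m × Fin m',
      (fun y : Fin 2 → ℝ =>
        if a p.1.castSucc < y 0 ∧ y 0 ≤ a p.1.succ ∧
           b p.2.castSucc < y 1 ∧ y 1 ≤ b p.2.succ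
        then P p / ((a p.1.succ - a p.1.castSucc) * (b p.2.succ - b p.2.castSucc))
        else 0)
      = Set.indicator
          {y : Fin 2 → ℝ | a p.1.castSucc < y 0 ∧ y 0 ≤ a p.1.succ ∧
            b p.2.castSucc < y 1 ∧ y 1 ≤ b p.2.succ}
          (fun _ => P p / ((a p.1.succ - a p.1.castSucc) * (b p.2.succ - b p.2.castSucc))) := by
    intro p
    ext y
    by_cases h : a p.1.castSucc < y 0 ∧ y 0 ≤ a p.1.succ ∧
        b p.2.castSucc < y 1 ∧ y 1 ≤ b p.2.succ
    · simp [Set.indicator_apply, Set.mem_setOf_eq, h]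
    · simp [Set.indicator_apply, Set.mem_setOf_eq, h]
  have hint : ∀ p : Fin m × Fin m',
      IntegrableOn (fun y : Fin 2 → ℝ =>
        if a p.1.castSucc < y 0 ∧ y 0 ≤ a p.1.succ ∧
           b p.2.castSucc < y 1 ∧ y 1 ≤ b p.2.succ
        then P p / ((a p.1.succ - a p.1.castSucc) * (b p.2.succ - b p.2.castSucc))
        else 0) T := by
    intro p
    rw [key p]
    exact (integrableOn_const hTfin.ne).indicator
      (measurableSet_rect _ _ _ _)
  unfold cellCDF cellDensity
  rw [← hT, integral_finset_sum _ (fun p _ => hint p)]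
  refine Finset.sum_congr rfl fun p _ => ?_
  have h0a : (0:ℝ) ≤ a p.1.castSucc := by
    rw [← ha0]; exact ha.monotone (Fin.zero_le _)
  have h1a : a p.1.succ ≤ 1 := by
    rw [← ha1]; exact ha.monotone (Fin.le_last _)
  have h0b : (0:ℝ) ≤ b p.2.castSucc := by
    rw [← hb0]; exact hb.monotone (Fin.zero_le _)
  have h1b : b p.2.succ ≤ 1 := by
    rw [← hb1]; exact hb.monotone (Fin.le_last _)
  calc ∫ y in T,
        (if a p.1.castSucc < y 0 ∧ y 0 ≤ a p.1.succ ∧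
            b p.2.castSucc < y 1 ∧ y 1 ≤ b p.2.succ
         then P p / ((a p.1.succ - a p.1.castSucc) * (b p.2.succ - b p.2.castSucc))
         else 0)
      = ∫ y in T, Set.indicator
          {y : Fin 2 → ℝ | a p.1.castSucc < y 0 ∧ y 0 ≤ a p.1.succ ∧
            b p.2.castSucc < y 1 ∧ y 1 ≤ b p.2.succ}
          (fun _ => P p /
            ((a p.1.succ - a p.1.castSucc) * (b p.2.succ - b p.2.castSucc))) y := by
        rw [key p]
    _ = ∫ y in T ∩ {y : Fin 2 → ℝ | a p.1.castSucc < y 0 ∧ y 0 ≤ a p.1.succ ∧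
            b p.2.castSucc < y 1 ∧ y 1 ≤ b p.2.succ},
          P p / ((a p.1.succ - a p.1.castSucc) * (b p.2.succ - b p.2.castSucc)) := by
        rw [setIntegral_indicator (measurableSet_rect _ _ _ _)]
    _ = (volume (T ∩ {y : Fin 2 → ℝ | a p.1.castSucc < y 0 ∧ y 0 ≤ a p.1.succ ∧
            b p.2.castSucc < y 1 ∧ y 1 ≤ b p.2.succ})).toReal
          • (P p / ((a p.1.succ - a p.1.castSucc) * (b p.2.succ - b p.2.castSucc))) := by
        rw [setIntegral_const, measureReal_def]
    _ = (P p / ((a p.1.succ - a p.1.castSucc) * (b p.2.succ - b p.2.castSucc)))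
        * gridF a b p x := by
        rw [Set.inter_comm, hT, rect_inter_lower x h0a h1a h0b h1b, volume_box,
          Real.volume_Ioc, Real.volume_Ioc, ENNReal.toReal_mul,
          ENNReal.toReal_ofReal', ENNReal.toReal_ofReal']
        unfold gridF
        rw [smul_eq_mul]
        ring

/-- Kendall's tau of a bivariate grid-uniform copula admits a
closed-form expression as a finite quadratic form in the cell probabilities, with
coefficients depending only on the grid points. -/
theorem kendallTau_quadratic_form
    (a : Fin (m + 1) → ℝ) (b : Fin (m' + 1) → ℝ)
    (ha : StrictMono a) (hb : StrictMono b)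
    (ha0 : a 0 = 0) (ha1 : a (Fin.last m) = 1)
    (hb0 : b 0 = 0) (hb1 : b (Fin.last m') = 1) :
    ∃ (A : Fin m × Fin m' → Fin m × Fin m' → ℝ)
      (B : Fin m × Fin m' → ℝ) (c₀ : ℝ),
      ∀ P : Fin m × Fin m' → ℝ, (∀ p, 0 ≤ P p) →
        -- uniform-marginal (copula) constraints on the cell probabilities:
        (∀ k : Fin m, (∑ l : Fin m', P (k, l)) = a k.succ - a k.castSucc) →
        (∀ l : Fin m', (∑ k : Fin m, P (k, l)) = b l.succ - b l.castSucc) →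
        kendallTau a b P
          = (∑ p : Fin m × Fin m', ∑ q : Fin m × Fin m', A p q * P p * P q)
            + (∑ p : Fin m × Fin m', B p * P p) + c₀ := by
  classical
  set Q : Set (Fin 2 → ℝ) := Set.univ.pi fun _ : Fin 2 => Set.Icc (0:ℝ) 1 with hQ
  have hQc : IsCompact Q := isCompact_univ_pi fun _ => isCompact_Icc
  -- the per-cell indicator weight
  set g : Fin m × Fin m' → (Fin 2 → ℝ) → ℝ := fun q x =>
    if a q.1.castSucc < x 0 ∧ x 0 ≤ a q.1.succ ∧
       b q.2.castSucc < x 1 ∧ x 1 ≤ b q.2.succ then (1:ℝ) else 0 with hg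
  refine ⟨fun p q => 4 * (((a p.1.succ - a p.1.castSucc) * (b p.2.succ - b p.2.castSucc))⁻¹ *
      ((a q.1.succ - a q.1.castSucc) * (b q.2.succ - b q.2.castSucc))⁻¹) *
      ∫ x in Q, gridF a b p x * g q x, fun _ => 0, -1, ?_⟩
  intro P _ _ _
  have hintg : ∀ p q : Fin m × Fin m',
      IntegrableOn (fun x => gridF a b p x * g q x) Q := by
    intro p q
    have h1 : (fun x => gridF a b p x * g q x)
        = Set.indicator {x : Fin 2 → ℝ | a q.1.castSucc < x 0 ∧ x 0 ≤ a q.1.succ ∧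
            b q.2.castSucc < x 1 ∧ x 1 ≤ b q.2.succ} (gridF a b p) := by
      ext x
      by_cases h : a q.1.castSucc < x 0 ∧ x 0 ≤ a q.1.succ ∧
          b q.2.castSucc < x 1 ∧ x 1 ≤ b q.2.succ
      · simp [hg, Set.indicator_apply, Set.mem_setOf_eq, h]
      · simp [hg, Set.indicator_apply, Set.mem_setOf_eq, h]
    rw [h1]
    exact (((continuous_gridF a b p).continuousOn.integrableOn_compact hQc)).indicator
      (measurableSet_rect _ _ _ _)
  have hpt : ∀ x : Fin 2 → ℝ,
      cellCDF a b P x * cellDensity a b P x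
      = ∑ p : Fin m × Fin m', ∑ q : Fin m × Fin m',
          ((P p / ((a p.1.succ - a p.1.castSucc) * (b p.2.succ - b p.2.castSucc)))
            * (P q / ((a q.1.succ - a q.1.castSucc) * (b q.2.succ - b q.2.castSucc))))
          * (gridF a b p x * g q x) := by
    intro x
    rw [cellCDF_eq a b ha hb ha0 ha1 hb0 hb1 P x]
    unfold cellDensity
    rw [Finset.sum_mul_sum]
    refine Finset.sum_congr rfl fun p _ => Finset.sum_congr rfl fun q _ => ?_
    simp only [hg]
    split_ifs <;> ring
  have hint2 : ∀ p q : Fin m × Fin m',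
      IntegrableOn (fun x =>
        ((P p / ((a p.1.succ - a p.1.castSucc) * (b p.2.succ - b p.2.castSucc)))
          * (P q / ((a q.1.succ - a q.1.castSucc) * (b q.2.succ - b q.2.castSucc))))
        * (gridF a b p x * g q x)) Q :=
    fun p q => (hintg p q).const_mul _
  have hI : (∫ x in Q, cellCDF a b P x * cellDensity a b P x)
      = ∑ p : Fin m × Fin m', ∑ q : Fin m × Fin m',
          ((P p / ((a p.1.succ - a p.1.castSucc) * (b p.2.succ - b p.2.castSucc)))
            * (P q / ((a q.1.succ - a q.1.castSucc) * (b q.2.succ - b q.2.castSucc))))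
          * ∫ x in Q, gridF a b p x * g q x := by
    rw [setIntegral_congr_fun hQc.measurableSet (fun x _ => hpt x)]
    rw [integral_finset_sum _ (fun p _ => integrable_finset_sum _ (fun q _ => hint2 p q))]
    refine Finset.sum_congr rfl fun p _ => ?_
    rw [integral_finset_sum _ (fun q _ => hint2 p q)]
    exact Finset.sum_congr rfl fun q _ => integral_const_mul _ _
  unfold kendallTau
  rw [← hQ, hI]
  simp only [mul_zero, zero_mul, Finset.sum_const_zero, add_zero]
  rw [sub_eq_add_neg]
  congr 1
  rw [Finset.mul_sum]
  refine Finset.sum_congr rfl fun p _ => ?_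
  rw [Finset.mul_sum]
  refine Finset.sum_congr rfl fun q _ => ?_
  ring
end
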